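/- arXiv:1903.00409 — 4 statements merged into one kernel-verified Lean document; each statement's English description precedes it below -/
import Mathlib

section
/- Let H be a normal subgroup of a finite group G and ℬ an S-ring over H. Let 𝒜 = ℬ ≀ ℤ(G/H) denote the S-ring over G whose basic sets are the basic sets of ℬ together with the cosets gH for g ∈ G \ H. Suppose that φ is an algebraic automorphism of ℬ that is not induced by a combinatorial isomorphism. Then there exists an algebraic automorphism ψ of 𝒜 whose restriction to the basic sets of ℬ equals φ and which is not induced by a combinatorial isomorphism. -/
open Pointwise

/-- The number of representations of `z` as a product `x * y` with `x ∈ X`, `y ∈ Y`.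
For an S-ring with basic sets `X, Y, Z` and `z ∈ Z`, this is the structure
constant `c^Z_{X,Y}`. -/
def cnt {G : Type*} [Group G] [DecidableEq G] (X Y : Finset G) (z : G) : ℕ :=
  ((X ×ˢ Y).filter fun p => p.1 * p.2 = z).card

/-- An S-ring over a finite group `G`, presented by its partition into basic sets.
The condition `const` (structure constants are well defined) is equivalent to the
`ℤ`-span of the indicator elements being a subring of the group ring `ℤG`. -/
structure SRing (G : Type*) [Group G] [Fintype G] [DecidableEq G] where
  basicSets : Finset (Finset G)
  nonempty_mem : ∀ X ∈ basicSets, X.Nonempty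
  exists_mem : ∀ g : G, ∃ X ∈ basicSets, g ∈ X
  pairwise_disjoint : ∀ X ∈ basicSets, ∀ Y ∈ basicSets, X ≠ Y → Disjoint X Y
  one_mem : ({1} : Finset G) ∈ basicSets
  inv_mem : ∀ X ∈ basicSets, X⁻¹ ∈ basicSets
  const : ∀ X ∈ basicSets, ∀ Y ∈ basicSets, ∀ Z ∈ basicSets,
    ∀ z ∈ Z, ∀ z' ∈ Z, cnt X Y z = cnt X Y z'

/-- `R(X) = {(g, x*g) : x ∈ X, g ∈ G}`, the arc set of the Cayley graph of `X`. -/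
def RSet {G : Type*} [Group G] (X : Finset G) : Set (G × G) :=
  {p | ∃ x ∈ X, ∃ g : G, p = (g, x * g)}

/-- A combinatorial isomorphism between S-rings: a bijection of the underlying groups
mapping the family of relations `R(X)`, `X` basic, onto the corresponding family. -/
def IsCombIso {G H : Type*} [Group G] [Fintype G] [DecidableEq G]
    [Group H] [Fintype H] [DecidableEq H]
    (A : SRing G) (A' : SRing H) (f : G → H) : Prop :=
  Function.Bijective f ∧
    {S : Set (H × H) | ∃ X ∈ A.basicSets, S = Prod.map f f '' RSet X} =
      {S : Set (H × H) | ∃ X' ∈ A'.basicSets, S = RSet X'}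

/-- An algebraic isomorphism between S-rings: a bijection between the sets
of basic sets preserving the structure constants. -/
def IsAlgIso {G H : Type*} [Group G] [Fintype G] [DecidableEq G]
    [Group H] [Fintype H] [DecidableEq H]
    (A : SRing G) (A' : SRing H) (φ : Finset G → Finset H) : Prop :=
  Set.BijOn φ ↑A.basicSets ↑A'.basicSets ∧
    ∀ X ∈ A.basicSets, ∀ Y ∈ A.basicSets, ∀ Z ∈ A.basicSets,
      ∀ z ∈ Z, ∀ z' ∈ φ Z, cnt X Y z = cnt (φ X) (φ Y) z'

/-- `φ` is the algebraic isomorphism induced by the combinatorial isomorphism `f`,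
i.e. `φ = φ_f` where `R(φ_f(X)) = R(X)^f` for every basic set `X`. -/
def InducedBy {G H : Type*} [Group G] [Fintype G] [DecidableEq G]
    [Group H] [Fintype H] [DecidableEq H]
    (A : SRing G) (A' : SRing H) (φ : Finset G → Finset H) (f : G → H) : Prop :=
  IsCombIso A A' f ∧ ∀ X ∈ A.basicSets, RSet (φ X) = Prod.map f f '' RSet X

/-- A group `G` is separable with respect to the class of all finite abelian groups. -/
def SeparableWrtAbelian (G : Type*) [Group G] [Fintype G] [DecidableEq G] : Prop :=
  ∀ (A : SRing G) (H : Type) [CommGroup H] [Fintype H] [DecidableEq H]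
    (A' : SRing H) (φ : Finset G → Finset H),
      IsAlgIso A A' φ → ∃ f : G → H, InducedBy A A' φ f

/-- A group `G` is weakly separable: every algebraic isomorphism from an S-ring
over `G` to an S-ring over a group isomorphic to `G` is induced by a
combinatorial isomorphism. -/
def WeaklySeparable (G : Type*) [Group G] [Fintype G] [DecidableEq G] : Prop :=
  ∀ (A : SRing G) (H : Type) [Group H] [Fintype H] [DecidableEq H],
    Nonempty (G ≃* H) →
      ∀ (A' : SRing H) (φ : Finset G → Finset H),
        IsAlgIso A A' φ → ∃ f : G → H, InducedBy A A' φ f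

/-- An S-ring is schurian if its basic sets are the orbits of the stabilizer of the
identity in some permutation group `K` with `G_right ≤ K ≤ Sym(G)`. -/
def SRing.IsSchurian {G : Type*} [Group G] [Fintype G] [DecidableEq G]
    (A : SRing G) : Prop :=
  ∃ K : Subgroup (Equiv.Perm G), (∀ g : G, Equiv.mulRight g ∈ K) ∧
    ∀ X : Finset G, X ∈ A.basicSets ↔
      ∃ g : G, (X : Set G) = MulAction.orbit (MulAction.stabilizer K (1 : G)) g

/-- A finite group is a Schur group if every S-ring over it is schurian. -/
def IsSchurGroup (G : Type*) [Group G] [Fintype G] [DecidableEq G] : Prop :=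
  ∀ A : SRing G, A.IsSchurian

/-- A group is elementary abelian if it is abelian and of exponent dividing a prime,
equivalently isomorphic to `(C_p)^k` for some prime `p` and `k ≥ 0`. -/
def IsElementaryAbelian (G : Type*) [Group G] : Prop :=
  (∀ a b : G, a * b = b * a) ∧ ∃ p : ℕ, p.Prime ∧ ∀ g : G, g ^ p = 1

/-- `Ω(n)`, the number of prime divisors of `n` counted with multiplicity. -/
def bigOmega (n : ℕ) : ℕ := n.primeFactorsList.length

/-- `Ω*(n) = Ω(n)` for odd `n` and `Ω*(n) = Ω(n/2)` for even `n`. -/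
def OmegaStar (n : ℕ) : ℕ := if 2 ∣ n then bigOmega (n / 2) else bigOmega n

/-!
The extension `ψ` of `φ` acts as `φ` on the basic sets inside `H` and fixes every coset `gH`,
`g ∉ H`. Every basic set of `𝒜` lies in a single coset of `H`, and `ψ` keeps it in that coset
and preserves its size (algebraic isomorphisms preserve sizes). If one factor of a product is a
full coset, the structure constant is the size of the other factor or `0`, according to the
coset of the product alone; so these constants are preserved, and the remaining ones are those
of `ℬ`. If a bijection `f` of `G` induced `ψ`, then `h ↦ f h * (f 1)⁻¹` would map `H` to
itself and induce `φ`.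
-/

open Finset Function Set

section StructureConstants

variable {G : Type*} [Group G] [DecidableEq G]

theorem cnt_eq_card_filter_left (X Y : Finset G) (z : G) :
    cnt X Y z = #{x ∈ X | x⁻¹ * z ∈ Y} := by
  refine card_nbij' Prod.fst (fun x => (x, x⁻¹ * z)) ?_ ?_ ?_ ?_ <;>
    simp +contextual [MapsTo, LeftInvOn, RightInvOn, ← eq_inv_mul_iff_mul_eq]
  rintro x _ - hy rfl
  exact hy

theorem cnt_eq_card_filter_right (X Y : Finset G) (z : G) :
    cnt X Y z = #{y ∈ Y | z * y⁻¹ ∈ X} := by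
  refine card_nbij' Prod.snd (fun y => (z * y⁻¹, y)) ?_ ?_ ?_ ?_ <;>
    simp +contextual [MapsTo, LeftInvOn, RightInvOn, ← eq_mul_inv_iff_mul_eq]
  rintro _ _ hx - rfl
  exact hx

theorem cnt_le_card_left (X Y : Finset G) (z : G) : cnt X Y z ≤ #X := by
  rw [cnt_eq_card_filter_left]
  exact card_filter_le _ _

theorem cnt_inv_one (X : Finset G) : cnt X X⁻¹ 1 = #X := by
  rw [cnt_eq_card_filter_left, filter_true_of_mem]
  intro x hx
  simpa using inv_mem_inv hx

theorem cnt_singleton_one_left (Y : Finset G) (z : G) :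
    cnt {1} Y z = if z ∈ Y then 1 else 0 := by
  rw [cnt_eq_card_filter_left, filter_singleton]
  split_ifs <;> simp_all

theorem cnt_singleton_one_right (X : Finset G) (z : G) :
    cnt X {1} z = if z ∈ X then 1 else 0 := by
  rw [cnt_eq_card_filter_right, filter_singleton]
  split_ifs <;> simp_all

theorem cnt_image_of_injective {G' : Type*} [Group G'] [DecidableEq G'] (f : G →* G')
    (hf : Injective f) (X Y : Finset G) (z : G) :
    cnt (X.image f) (Y.image f) (f z) = cnt X Y z := by
  simp only [cnt_eq_card_filter_left, filter_image, card_image_of_injective _ hf, ← map_inv,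
    ← map_mul, hf.mem_finset_image]

theorem cnt_eq_zero_of_forall_mul_ne {X Y : Finset G} {z : G}
    (h : ∀ x ∈ X, ∀ y ∈ Y, x * y ≠ z) : cnt X Y z = 0 := by
  simp only [cnt, card_eq_zero, filter_eq_empty_iff, mem_product]
  exact fun p hp => h _ hp.1 _ hp.2

end StructureConstants

section Cosets

variable {G : Type*} [Group G] {H : Subgroup G}

theorem mem_iff_mk_eq_of_coe_eq_smul {X : Finset G} {g : G}
    (hX : (X : Set G) = g • (H : Set G)) {x : G} : x ∈ X ↔ (x : G ⧸ H) = g := by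
  rw [← Finset.mem_coe, hX, mem_leftCoset_iff, SetLike.mem_coe, eq_comm, QuotientGroup.eq]

theorem notMem_of_mem_of_coe_eq_smul [H.Normal] {X : Finset G} {g x : G} (hg : g ∉ H)
    (hX : (X : Set G) = g • (H : Set G)) (hx : x ∈ X) : x ∉ H := by
  rw [mem_iff_mk_eq_of_coe_eq_smul hX] at hx
  rwa [← QuotientGroup.eq_one_iff, hx, QuotientGroup.eq_one_iff]

variable [DecidableEq G]

theorem cnt_image_coe (X Y : Finset H) (z : H) :
    cnt (X.image (↑)) (Y.image (↑)) (z : G) = cnt X Y z :=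
  cnt_image_of_injective H.subtype H.subtype_injective X Y z

theorem cnt_image_coe_of_notMem (X Y : Finset H) {z : G} (hz : z ∉ H) :
    cnt (X.image (↑)) (Y.image (↑)) z = 0 := by
  refine cnt_eq_zero_of_forall_mul_ne fun x hx y hy hxy => hz ?_
  obtain ⟨x, -, rfl⟩ := mem_image.1 hx
  obtain ⟨y, -, rfl⟩ := mem_image.1 hy
  exact hxy ▸ (x * y).2

theorem preimage_image_coe (Y : Finset H) :
    (Y.image ((↑) : H → G)).preimage (↑) Subtype.coe_injective.injOn = Y := by
  ext y
  rw [Finset.mem_preimage, Subtype.coe_injective.mem_finset_image]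

variable [H.Normal]

theorem mk_eq_one_of_mem_image_coe {Y : Finset H} {x : G} (hx : x ∈ Y.image (↑)) :
    (x : G ⧸ H) = 1 := by
  obtain ⟨y, -, rfl⟩ := mem_image.1 hx
  exact (QuotientGroup.eq_one_iff _).2 y.2

open Classical in
theorem cnt_of_coe_eq_smul_right {X Y : Finset G} {a : G ⧸ H} {g : G}
    (hX : ∀ x ∈ X, (x : G ⧸ H) = a) (hY : (Y : Set G) = g • (H : Set G)) (z : G) :
    cnt X Y z = if (z : G ⧸ H) = a * g then #X else 0 := by
  have key : ∀ x ∈ X, x⁻¹ * z ∈ Y ↔ (z : G ⧸ H) = a * g := fun x hx => by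
    rw [mem_iff_mk_eq_of_coe_eq_smul hY, QuotientGroup.mk_mul, QuotientGroup.mk_inv, hX x hx,
      inv_mul_eq_iff_eq_mul]
  rw [cnt_eq_card_filter_left, filter_congr key, filter_const]
  split_ifs <;> rfl

open Classical in
theorem cnt_of_coe_eq_smul_left {X Y : Finset G} {g : G} {b : G ⧸ H}
    (hX : (X : Set G) = g • (H : Set G)) (hY : ∀ y ∈ Y, (y : G ⧸ H) = b) (z : G) :
    cnt X Y z = if (z : G ⧸ H) = g * b then #Y else 0 := by
  have key : ∀ y ∈ Y, z * y⁻¹ ∈ X ↔ (z : G ⧸ H) = g * b := fun y hy => by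
    rw [mem_iff_mk_eq_of_coe_eq_smul hX, QuotientGroup.mk_mul, QuotientGroup.mk_inv, hY y hy,
      mul_inv_eq_iff_eq_mul]
  rw [cnt_eq_card_filter_right, filter_congr key, filter_const]
  split_ifs <;> rfl

end Cosets

section Relations

variable {G G' : Type*} [Group G] [Group G']

theorem mem_rSet_iff {X : Finset G} {a b : G} : (a, b) ∈ RSet X ↔ b * a⁻¹ ∈ X := by
  simp [RSet, ← mul_inv_eq_iff_eq_mul]

theorem rSet_eq_image_iff {f : G → G'} (hf : Bijective f) {X : Finset G} {X' : Finset G'} :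
    RSet X' = Prod.map f f '' RSet X ↔ ∀ a b, b * a⁻¹ ∈ X ↔ f b * (f a)⁻¹ ∈ X' := by
  have hinj : Injective (Prod.map f f) := hf.1.prodMap hf.1
  constructor
  · intro h a b
    rw [← mem_rSet_iff, ← mem_rSet_iff, h, ← hinj.mem_set_image]
    rfl
  · intro h
    ext ⟨a', b'⟩
    obtain ⟨a, rfl⟩ := hf.2 a'
    obtain ⟨b, rfl⟩ := hf.2 b'
    rw [mem_rSet_iff, show (f a, f b) = Prod.map f f (a, b) from rfl, hinj.mem_set_image,
      mem_rSet_iff, h]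

end Relations

section Isomorphisms

variable {G G' : Type*} [Group G] [Fintype G] [DecidableEq G] [Group G'] [Fintype G']
  [DecidableEq G'] {A : SRing G} {A' : SRing G'}

theorem SRing.eq_of_mem_of_mem (A : SRing G) {X Y : Finset G} (hX : X ∈ A.basicSets)
    (hY : Y ∈ A.basicSets) {g : G} (hgX : g ∈ X) (hgY : g ∈ Y) : X = Y := by
  by_contra hne
  exact disjoint_left.mp (A.pairwise_disjoint X hX Y hY hne) hgX hgY

section AlgIso

variable {φ : Finset G → Finset G'}

theorem IsAlgIso.symm (hφ : IsAlgIso A A' φ) : IsAlgIso A' A (invFunOn φ A.basicSets) := by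
  have hinv := hφ.1.invOn_invFunOn
  have hmaps := hφ.1.surjOn.mapsTo_invFunOn
  refine ⟨hφ.1.symm hinv.symm, fun X hX Y hY Z hZ z hz z' hz' => ?_⟩
  have h := hφ.2 _ (hmaps hX) _ (hmaps hY) _ (hmaps hZ) z' hz' z (by rwa [hinv.2 hZ])
  rwa [hinv.2 hX, hinv.2 hY, eq_comm] at h

theorem IsAlgIso.map_one (hφ : IsAlgIso A A' φ) : φ {1} = {1} := by
  obtain ⟨X, hX, hXφ⟩ := hφ.1.surjOn A'.one_mem
  obtain ⟨z, hz⟩ := A.nonempty_mem X hX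
  have h := hφ.2 {1} A.one_mem X hX X hX z hz 1 (by simp [hXφ])
  rw [hXφ, cnt_singleton_one_left, cnt_singleton_one_right, if_pos hz] at h
  have h1 : (1 : G') ∈ φ {1} := by
    by_contra h1
    simp [h1] at h
  exact A'.eq_of_mem_of_mem (hφ.1.mapsTo A.one_mem) A'.one_mem h1 (mem_singleton_self 1)

theorem IsAlgIso.card_le (hφ : IsAlgIso A A' φ) {X : Finset G} (hX : X ∈ A.basicSets) :
    #X ≤ #(φ X) :=
  calc #X = cnt X X⁻¹ 1 := (cnt_inv_one X).symm
    _ = cnt (φ X) (φ X⁻¹) 1 :=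
      hφ.2 X hX X⁻¹ (A.inv_mem X hX) {1} A.one_mem 1 (mem_singleton_self 1) 1
        (by simp [hφ.map_one])
    _ ≤ #(φ X) := cnt_le_card_left _ _ _

theorem IsAlgIso.card_eq (hφ : IsAlgIso A A' φ) {X : Finset G} (hX : X ∈ A.basicSets) :
    #(φ X) = #X :=
  le_antisymm
    (calc #(φ X) ≤ #(invFunOn φ A.basicSets (φ X)) := hφ.symm.card_le (hφ.1.mapsTo hX)
      _ = #X := by rw [hφ.1.invOn_invFunOn.1 hX])
    (hφ.card_le hX)

end AlgIso

variable {φ : Finset G → Finset G'} {f : G → G'}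

theorem InducedBy.mem_iff (h : InducedBy A A' φ f) {X : Finset G} (hX : X ∈ A.basicSets)
    (a b : G) : b * a⁻¹ ∈ X ↔ f b * (f a)⁻¹ ∈ φ X :=
  (rSet_eq_image_iff h.1.1).1 (h.2 X hX) a b

theorem inducedBy_of_forall_mem_iff (hφ : BijOn φ A.basicSets A'.basicSets) (hf : Bijective f)
    (h : ∀ X ∈ A.basicSets, ∀ a b, b * a⁻¹ ∈ X ↔ f b * (f a)⁻¹ ∈ φ X) :
    InducedBy A A' φ f := by
  have hR : ∀ X ∈ A.basicSets, RSet (φ X) = Prod.map f f '' RSet X :=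
    fun X hX => (rSet_eq_image_iff hf).2 (h X hX)
  refine ⟨⟨hf, ?_⟩, hR⟩
  ext S
  constructor
  · rintro ⟨X, hX, rfl⟩
    exact ⟨φ X, hφ.mapsTo hX, (hR X hX).symm⟩
  · rintro ⟨X', hX', rfl⟩
    obtain ⟨X, hX, rfl⟩ := hφ.surjOn hX'
    exact ⟨X, hX, hR X hX⟩

end Isomorphisms

section Extension

variable {G : Type*} [Group G] [DecidableEq G] {H : Subgroup G} (φ : Finset H → Finset H)

open Classical in
noncomputable def extendWreath (X : Finset G) : Finset G :=
  if (X : Set G) ⊆ H then (φ (X.preimage (↑) Subtype.coe_injective.injOn)).image (↑) else X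

theorem extendWreath_image (Y : Finset H) :
    extendWreath φ (Y.image (↑)) = (φ Y).image (↑) := by
  rw [extendWreath, if_pos, preimage_image_coe]
  intro _ hx
  obtain ⟨y, -, rfl⟩ := Finset.mem_image.1 hx
  exact y.2

variable {φ} in
theorem extendWreath_of_coe_eq_smul {X : Finset G} {g : G} (hg : g ∉ H)
    (hX : (X : Set G) = g • (H : Set G)) : extendWreath φ X = X := by
  rw [extendWreath, if_neg]
  intro hXH
  exact hg (hXH ((mem_iff_mk_eq_of_coe_eq_smul hX).2 rfl))

end Extension

section Wreath

variable {G : Type*} [Group G] [Fintype G] [DecidableEq G] {H : Subgroup G} [Fintype H]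
  {B B' : SRing H} {A A' : SRing G} {φ : Finset H → Finset H}

theorem exists_inducedBy_of_forall_mem_image_iff (hφ : BijOn φ B.basicSets B'.basicSets)
    {f : G → G} (hf : Injective f)
    (hfφ : ∀ Y ∈ B.basicSets, ∀ a b : G,
      b * a⁻¹ ∈ Y.image (↑) ↔ f b * (f a)⁻¹ ∈ (φ Y).image (↑)) :
    ∃ f' : H → H, InducedBy B B' φ f' := by
  have hmem : ∀ h : H, f h * (f 1)⁻¹ ∈ H := fun h => by
    obtain ⟨Y, hY, hhY⟩ := B.exists_mem h
    have hhY' : (h : G) * 1⁻¹ ∈ Y.image (↑) := by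
      simpa using Finset.mem_image_of_mem Subtype.val hhY
    obtain ⟨y, -, hy⟩ := mem_image.1 ((hfφ Y hY 1 h).1 hhY')
    exact hy ▸ y.2
  let f' : H → H := fun h => ⟨f h * (f 1)⁻¹, hmem h⟩
  have hf' : ∀ a b : H, ((f' b * (f' a)⁻¹ : H) : G) = f b * (f a)⁻¹ := fun a b => by
    simp only [f', Subgroup.coe_mul, Subgroup.coe_inv]
    group
  have hf'inj : Injective f' := fun a b hab =>
    Subtype.coe_injective (hf (mul_right_cancel (congrArg Subtype.val hab)))
  refine ⟨f', inducedBy_of_forall_mem_iff hφ (Finite.injective_iff_bijective.1 hf'inj)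
    fun Y hY a b => ?_⟩
  rw [← Subtype.coe_injective.mem_finset_image, ← Subtype.coe_injective.mem_finset_image, hf',
    ← hfφ Y hY]
  rfl

/-- `A = B ≀ ℤ(G/H)`. -/
def IsWreathOverQuotient (B : SRing H) (A : SRing G) : Prop :=
  ∀ X : Finset G, X ∈ A.basicSets ↔
    ((∃ Y ∈ B.basicSets, X = Y.image (↑)) ∨
      (∃ g : G, g ∉ H ∧ (X : Set G) = g • (H : Set G)))

theorem IsWreathOverQuotient.image_mem (hA : IsWreathOverQuotient B A) {Y : Finset H}
    (hY : Y ∈ B.basicSets) : Y.image (↑) ∈ A.basicSets :=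
  (hA _).2 (.inl ⟨Y, hY, rfl⟩)

theorem IsWreathOverQuotient.mem_of_coe_eq_smul (hA : IsWreathOverQuotient B A) {X : Finset G}
    {g : G} (hg : g ∉ H) (hX : (X : Set G) = g • (H : Set G)) : X ∈ A.basicSets :=
  (hA _).2 (.inr ⟨g, hg, hX⟩)

theorem mapsTo_extendWreath (hA : IsWreathOverQuotient B A) (hA' : IsWreathOverQuotient B' A')
    (hφ : MapsTo φ B.basicSets B'.basicSets) :
    MapsTo (extendWreath φ) A.basicSets A'.basicSets := by
  intro X hX
  rcases (hA X).1 hX with ⟨Y, hY, rfl⟩ | ⟨g, hg, hXg⟩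
  · rw [extendWreath_image]
    exact hA'.image_mem (hφ hY)
  · rw [extendWreath_of_coe_eq_smul hg hXg]
    exact hA'.mem_of_coe_eq_smul hg hXg

theorem leftInvOn_extendWreath (hA : IsWreathOverQuotient B A) {φ' : Finset H → Finset H}
    (h : LeftInvOn φ' φ B.basicSets) :
    LeftInvOn (extendWreath φ') (extendWreath φ) A.basicSets := by
  intro X hX
  rcases (hA X).1 hX with ⟨Y, hY, rfl⟩ | ⟨g, hg, hXg⟩
  · rw [extendWreath_image, extendWreath_image, h hY]
  · rw [extendWreath_of_coe_eq_smul hg hXg, extendWreath_of_coe_eq_smul hg hXg]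

theorem bijOn_extendWreath (hA : IsWreathOverQuotient B A) (hA' : IsWreathOverQuotient B' A')
    (hφ : BijOn φ B.basicSets B'.basicSets) :
    BijOn (extendWreath φ) A.basicSets A'.basicSets :=
  have hinv := hφ.invOn_invFunOn
  InvOn.bijOn ⟨leftInvOn_extendWreath hA hinv.1, leftInvOn_extendWreath hA' hinv.2⟩
    (mapsTo_extendWreath hA hA' hφ.mapsTo)
    (mapsTo_extendWreath hA' hA hφ.surjOn.mapsTo_invFunOn)

section Normal

variable [H.Normal]

theorem exists_mk_eq_of_mem_extendWreath (hA : IsWreathOverQuotient B A)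
    (hφ : IsAlgIso B B' φ) {X : Finset G} (hX : X ∈ A.basicSets) :
    ∃ c : G ⧸ H, (∀ x ∈ X, (x : G ⧸ H) = c) ∧
      (∀ x ∈ extendWreath φ X, (x : G ⧸ H) = c) ∧ #(extendWreath φ X) = #X := by
  rcases (hA X).1 hX with ⟨Y, hY, rfl⟩ | ⟨g, hg, hXg⟩
  · rw [extendWreath_image, Finset.card_image_of_injective _ Subtype.coe_injective,
      Finset.card_image_of_injective _ Subtype.coe_injective, hφ.card_eq hY]
    exact ⟨1, fun _ => mk_eq_one_of_mem_image_coe, fun _ => mk_eq_one_of_mem_image_coe, rfl⟩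
  · rw [extendWreath_of_coe_eq_smul hg hXg]
    exact ⟨g, fun _ => (mem_iff_mk_eq_of_coe_eq_smul hXg).1,
      fun _ => (mem_iff_mk_eq_of_coe_eq_smul hXg).1, rfl⟩

theorem cnt_extendWreath (hA : IsWreathOverQuotient B A) (hφ : IsAlgIso B B' φ)
    {X Y Z : Finset G} (hX : X ∈ A.basicSets) (hY : Y ∈ A.basicSets) (hZ : Z ∈ A.basicSets)
    {z z' : G} (hz : z ∈ Z) (hz' : z' ∈ extendWreath φ Z) :
    cnt X Y z = cnt (extendWreath φ X) (extendWreath φ Y) z' := by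
  obtain ⟨c, hXc, hψXc, hcardX⟩ := exists_mk_eq_of_mem_extendWreath hA hφ hX
  obtain ⟨d, hYd, hψYd, hcardY⟩ := exists_mk_eq_of_mem_extendWreath hA hφ hY
  obtain ⟨e, hZe, hψZe, -⟩ := exists_mk_eq_of_mem_extendWreath hA hφ hZ
  have hzz' : (z : G ⧸ H) = z' := (hZe z hz).trans (hψZe z' hz').symm
  rcases (hA Y).1 hY with ⟨T, hT, rfl⟩ | ⟨g, hg, hYg⟩
  · rcases (hA X).1 hX with ⟨S, hS, rfl⟩ | ⟨g, hg, hXg⟩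
    · rw [extendWreath_image, extendWreath_image]
      rcases (hA Z).1 hZ with ⟨U, hU, rfl⟩ | ⟨g, hg, hZg⟩
      · rw [extendWreath_image] at hz'
        obtain ⟨u, hu, rfl⟩ := mem_image.1 hz
        obtain ⟨u', hu', rfl⟩ := mem_image.1 hz'
        rw [cnt_image_coe, cnt_image_coe]
        exact hφ.2 S hS T hT U hU u hu u' hu'
      · rw [extendWreath_of_coe_eq_smul hg hZg] at hz'
        rw [cnt_image_coe_of_notMem _ _ (notMem_of_mem_of_coe_eq_smul hg hZg hz),
          cnt_image_coe_of_notMem _ _ (notMem_of_mem_of_coe_eq_smul hg hZg hz')]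
    · rw [extendWreath_of_coe_eq_smul hg hXg, cnt_of_coe_eq_smul_left hXg hYd,
        cnt_of_coe_eq_smul_left hXg hψYd, hzz', hcardY]
  · rw [extendWreath_of_coe_eq_smul hg hYg, cnt_of_coe_eq_smul_right hXc hYg,
      cnt_of_coe_eq_smul_right hψXc hYg, hzz', hcardX]

theorem isAlgIso_extendWreath (hA : IsWreathOverQuotient B A) (hA' : IsWreathOverQuotient B' A')
    (hφ : IsAlgIso B B' φ) : IsAlgIso A A' (extendWreath φ) :=
  ⟨bijOn_extendWreath hA hA' hφ.1,
    fun _ hX _ hY _ hZ _ hz _ hz' => cnt_extendWreath hA hφ hX hY hZ hz hz'⟩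

end Normal

theorem not_exists_inducedBy_extendWreath (hA : IsWreathOverQuotient B A)
    (hφ : BijOn φ B.basicSets B'.basicSets) (hni : ¬ ∃ f : H → H, InducedBy B B' φ f) :
    ¬ ∃ f : G → G, InducedBy A A' (extendWreath φ) f := by
  rintro ⟨f, hf⟩
  refine hni (exists_inducedBy_of_forall_mem_image_iff hφ hf.1.1.1 fun Y hY a b => ?_)
  rw [hf.mem_iff (hA.image_mem hY), extendWreath_image]

end Wreath

/-- Let `H ⊴ G`, `ℬ` an S-ring over `H`, and `𝒜 = ℬ ≀ ℤ(G/H)` the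
S-ring over `G` whose basic sets are the basic sets of `ℬ` together with the cosets
`gH`, `g ∈ G \ H`. If `φ` is an algebraic automorphism of `ℬ` not induced by a
combinatorial isomorphism, then there is an algebraic automorphism `ψ` of `𝒜`
restricting to `φ` on the basic sets of `ℬ` and not induced by a combinatorial
isomorphism. -/
theorem wreath_algAut_not_induced (G : Type) [Group G] [Fintype G] [DecidableEq G]
    (H : Subgroup G) (hH : H.Normal) [Fintype H] (B : SRing H) (A : SRing G)
    (hA : ∀ X : Finset G, X ∈ A.basicSets ↔
      ((∃ Y ∈ B.basicSets, X = Finset.image ((↑) : H → G) Y) ∨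
        (∃ g : G, g ∉ H ∧ (X : Set G) = g • (H : Set G))))
    (φ : Finset H → Finset H) (hφ : IsAlgIso B B φ)
    (hni : ¬ ∃ f : H → H, InducedBy B B φ f) :
    ∃ ψ : Finset G → Finset G, IsAlgIso A A ψ ∧
      (∀ Y ∈ B.basicSets, ψ (Finset.image ((↑) : H → G) Y) =
        Finset.image ((↑) : H → G) (φ Y)) ∧
      ¬ ∃ f : G → G, InducedBy A A ψ f := by
  have := hH
  exact ⟨extendWreath φ, isAlgIso_extendWreath hA hA hφ, fun Y _ => extendWreath_image φ Y,
    not_exists_inducedBy_extendWreath hA hφ.1 hni⟩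
end

section
/- Let 𝒜 be a schurian S-ring over a finite group G and let K be a subgroup of Iso(𝒜), the group of all combinatorial isomorphisms from 𝒜 to itself. Let Φ = {φ_f : f ∈ K}, a subgroup of the group of algebraic automorphisms of 𝒜. Then the algebraic fusion 𝒜^Φ — the S-ring over G whose basic sets are the sets X^Φ = ∪_{φ∈Φ} φ(X) for X ∈ 𝒮(𝒜) — is also schurian. -/
open Pointwise

/-!
Let `L` be the automorphism group of the Cayley scheme of `𝒜^Φ`, i.e. the permutations of `G`
preserving every relation `R(W)` with `W` a basic set of `𝒜^Φ`. It contains `G_right`, the group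
`M` exhibiting `𝒜` as schurian (every `R(W)` is a union of basic relations of `𝒜`), and `K`
(which permutes the relations `R(φ_f(X))`, `f ∈ K`). Fix `x ∈ X`. For `f ∈ K`, the permutation `f`
followed by a right translation fixes `1` and sends `x` into `φ_f(X)`, which is an `M_1`-orbit.
Hence all of `X^Φ = ⋃ φ_f(X)` lies in the `L_1`-orbit of `x`, while `L_1` preserves each basic set
of `𝒜^Φ`; so the basic sets of `𝒜^Φ` are exactly the `L_1`-orbits.
-/

open MulAction

section

variable {G : Type*} [Group G]

lemma mem_RSet_iff {X : Finset G} {p : G × G} : p ∈ RSet X ↔ p.2 * p.1⁻¹ ∈ X :=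
  ⟨fun ⟨x, hx, g, hp⟩ => by simpa [hp] using hx, fun h => ⟨_, h, p.1, by simp⟩⟩

lemma RSet_injective : Function.Injective (RSet (G := G)) := by
  intro X Y h
  ext y
  simpa [mem_RSet_iff] using Set.ext_iff.1 h (1, y)

/-- The automorphism group of the Cayley scheme of `B`, using `(a, b) ∈ R(W) ↔ b * a⁻¹ ∈ W`. -/
def cayleyAut (B : Finset (Finset G)) : Subgroup (Equiv.Perm G) where
  carrier := {σ | ∀ W ∈ B, ∀ a b : G, σ b * (σ a)⁻¹ ∈ W ↔ b * a⁻¹ ∈ W}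
  one_mem' := by simp
  mul_mem' {σ τ} hσ hτ W hW a b := (hσ W hW (τ a) (τ b)).trans (hτ W hW a b)
  inv_mem' {σ} hσ W hW a b := by simpa using (hσ W hW (σ⁻¹ a) (σ⁻¹ b)).symm

lemma mulRight_mem_cayleyAut (B : Finset (Finset G)) (g : G) :
    Equiv.mulRight g ∈ cayleyAut B := by
  intro W _ a b
  simp [mul_assoc]

lemma apply_mem_iff_of_mem_cayleyAut {B : Finset (Finset G)} {σ : Equiv.Perm G}
    (hσ : σ ∈ cayleyAut B) (hσ1 : σ 1 = 1) {W : Finset G} (hW : W ∈ B) (g : G) :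
    σ g ∈ W ↔ g ∈ W := by
  simpa [hσ1] using hσ W hW 1 g

lemma cayleyAut_le_cayleyAut {B B' : Finset (Finset G)}
    (h : ∀ W ∈ B', ∀ w ∈ W, ∃ Y ∈ B, w ∈ Y ∧ Y ⊆ W) : cayleyAut B ≤ cayleyAut B' := by
  intro σ hσ W hW a b
  constructor
  · intro hab
    obtain ⟨Y, hY, hmem, hYW⟩ := h W hW _ hab
    exact hYW ((hσ Y hY a b).1 hmem)
  · intro hab
    obtain ⟨Y, hY, hmem, hYW⟩ := h W hW _ hab
    exact hYW ((hσ Y hY a b).2 hmem)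

lemma mem_orbit_stabilizer_one_iff {L : Subgroup (Equiv.Perm G)} {g h : G} :
    h ∈ orbit (stabilizer L (1 : G)) g ↔ ∃ ρ ∈ L, ρ 1 = 1 ∧ ρ g = h :=
  ⟨fun ⟨ρ, hρ⟩ => ⟨ρ.1.1, ρ.1.2, ρ.2, hρ⟩, fun ⟨ρ, hρL, hρ1, hρg⟩ => ⟨⟨⟨ρ, hρL⟩, hρ1⟩, hρg⟩⟩

lemma orbit_stabilizer_one_mono {M L : Subgroup (Equiv.Perm G)} (hML : M ≤ L) (g : G) :
    orbit (stabilizer M (1 : G)) g ⊆ orbit (stabilizer L (1 : G)) g := by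
  intro h hh
  obtain ⟨ρ, hρM, hρ⟩ := mem_orbit_stabilizer_one_iff.1 hh
  exact mem_orbit_stabilizer_one_iff.2 ⟨ρ, hML hρM, hρ⟩

lemma apply_mem_orbit_stabilizer_one_iff {L : Subgroup (Equiv.Perm G)} {ρ : Equiv.Perm G}
    (hρL : ρ ∈ L) (hρ1 : ρ 1 = 1) (g y : G) :
    ρ g ∈ orbit (stabilizer L (1 : G)) y ↔ g ∈ orbit (stabilizer L (1 : G)) y := by
  rw [← orbit_eq_iff, ← orbit_eq_iff]
  exact iff_of_eq (congrArg (· = _) (orbit_smul (⟨⟨ρ, hρL⟩, hρ1⟩ : stabilizer L (1 : G)) g))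

lemma le_cayleyAut_of_orbits {B : Finset (Finset G)} {M : Subgroup (Equiv.Perm G)}
    (hright : ∀ g : G, Equiv.mulRight g ∈ M)
    (horb : ∀ W ∈ B, ∃ y : G, (W : Set G) = orbit (stabilizer M (1 : G)) y) :
    M ≤ cayleyAut B := by
  intro σ hσ W hW a b
  obtain ⟨y, hy⟩ := horb W hW
  set ρ := Equiv.mulRight (σ a)⁻¹ * σ * Equiv.mulRight a
  have hρM : ρ ∈ M := mul_mem (mul_mem (hright _) hσ) (hright _)
  have hρ1 : ρ 1 = 1 := by simp [ρ, Equiv.Perm.mul_apply]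
  have hρ : ρ (b * a⁻¹) = σ b * (σ a)⁻¹ := by simp [ρ, Equiv.Perm.mul_apply]
  rw [← Finset.mem_coe, ← Finset.mem_coe, hy, ← hρ]
  exact apply_mem_orbit_stabilizer_one_iff hρM hρ1 _ y

lemma SRing.isSchurian_of_subset_orbit [Fintype G] [DecidableEq G] (B : SRing G)
    (h : ∀ W ∈ B.basicSets, ∃ x : G,
      (W : Set G) ⊆ orbit (stabilizer (cayleyAut B.basicSets) (1 : G)) x) :
    B.IsSchurian := by
  have horb : ∀ W ∈ B.basicSets, ∀ w ∈ W,
      (W : Set G) = orbit (stabilizer (cayleyAut B.basicSets) (1 : G)) w := by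
    intro W hW w hw
    obtain ⟨x, hWx⟩ := h W hW
    apply subset_antisymm
    · rwa [orbit_eq_iff.2 (hWx hw)]
    · intro u hu
      obtain ⟨ρ, hρL, hρ1, rfl⟩ := mem_orbit_stabilizer_one_iff.1 hu
      exact (apply_mem_iff_of_mem_cayleyAut hρL hρ1 hW w).2 hw
  refine ⟨cayleyAut B.basicSets, mulRight_mem_cayleyAut _, fun X => ⟨fun hX => ?_, ?_⟩⟩
  · obtain ⟨x, hx⟩ := B.nonempty_mem X hX
    exact ⟨x, horb X hX x hx⟩
  · rintro ⟨g, hXg⟩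
    obtain ⟨W, hW, hgW⟩ := B.exists_mem g
    rwa [Finset.coe_inj.1 (hXg.trans (horb W hW g hgW).symm)]

end

section

variable {G H : Type*} [Group G] [Fintype G] [DecidableEq G] [Group H] [Fintype H]
  [DecidableEq H] {A : SRing G} {A' : SRing H} {φ : Finset G → Finset H} {f : G → H}

lemma InducedBy.mem_basicSets (hφ : InducedBy A A' φ f) {X : Finset G} (hX : X ∈ A.basicSets) :
    φ X ∈ A'.basicSets := by
  have : RSet (φ X) ∈ {S : Set (H × H) | ∃ X' ∈ A'.basicSets, S = RSet X'} := by
    rw [← hφ.1.2]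
    exact ⟨X, hX, hφ.2 X hX⟩
  obtain ⟨X', hX', hXX'⟩ := this
  rwa [RSet_injective hXX']

lemma InducedBy.mul_inv_mem_iff (hφ : InducedBy A A' φ f) {X : Finset G}
    (hX : X ∈ A.basicSets) (a b : G) : f b * (f a)⁻¹ ∈ φ X ↔ b * a⁻¹ ∈ X := by
  have hinj := hφ.1.1.1.prodMap hφ.1.1.1
  rw [← mem_RSet_iff (p := (f a, f b)), ← mem_RSet_iff (p := (a, b)), hφ.2 X hX]
  exact hinj.mem_set_image (a := (a, b))

end

section

variable {G : Type*} [Group G] [Fintype G] [DecidableEq G] {A : SRing G}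
  {K : Subgroup (Equiv.Perm G)} {ψ : Equiv.Perm G → Finset G → Finset G}

lemma InducedBy.coe_subset_orbit {M L : Subgroup (Equiv.Perm G)}
    (hMorb : ∀ Y ∈ A.basicSets, ∃ y : G, (Y : Set G) = orbit (stabilizer M (1 : G)) y)
    (hML : M ≤ L) (hright : ∀ g : G, Equiv.mulRight g ∈ L) {f : Equiv.Perm G} (hfL : f ∈ L)
    {φ : Finset G → Finset G} (hφ : InducedBy A A φ f) {X : Finset G}
    (hX : X ∈ A.basicSets) {x : G} (hx : x ∈ X) :
    (φ X : Set G) ⊆ orbit (stabilizer L (1 : G)) x := by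
  set σ := Equiv.mulRight (f 1)⁻¹ * f
  have hσx : σ x ∈ orbit (stabilizer L (1 : G)) x :=
    mem_orbit_stabilizer_one_iff.2 ⟨σ, mul_mem (hright _) hfL, by simp [σ], rfl⟩
  have hσφ : σ x ∈ (φ X : Set G) :=
    (hφ.mul_inv_mem_iff hX 1 x).2 (by simpa using hx)
  obtain ⟨y, hy⟩ := hMorb _ (hφ.mem_basicSets hX)
  rw [hy] at hσφ ⊢
  rw [← orbit_eq_iff.2 hσφ, ← orbit_eq_iff.2 hσx]
  exact orbit_stabilizer_one_mono hML _

lemma mul_inv_mem_iUnion_iff (hψ : ∀ f ∈ K, InducedBy A A (ψ f) ⇑f) {X : Finset G}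
    (hX : X ∈ A.basicSets) (a b : G) :
    b * a⁻¹ ∈ ⋃ f ∈ (K : Set (Equiv.Perm G)), ((ψ f X : Finset G) : Set G) ↔
      ∃ h ∈ K, h b * (h a)⁻¹ ∈ X := by
  simp only [Set.mem_iUnion, SetLike.mem_coe, exists_prop]
  constructor
  · rintro ⟨f, hf, hab⟩
    refine ⟨f⁻¹, inv_mem hf, (hψ f hf).mul_inv_mem_iff hX _ _ |>.1 ?_⟩
    simpa using hab
  · rintro ⟨h, hh, hab⟩
    refine ⟨h⁻¹, inv_mem hh, ?_⟩
    simpa using (hψ h⁻¹ (inv_mem hh)).mul_inv_mem_iff hX (h a) (h b) |>.2 (by simpa using hab)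

lemma cayleyAut_le_cayleyAut_of_fusion {B : Finset (Finset G)}
    (hψ : ∀ f ∈ K, InducedBy A A (ψ f) ⇑f)
    (hB : ∀ W ∈ B, ∃ X ∈ A.basicSets,
      (W : Set G) = ⋃ f ∈ (K : Set (Equiv.Perm G)), ((ψ f X : Finset G) : Set G)) :
    cayleyAut A.basicSets ≤ cayleyAut B := by
  refine cayleyAut_le_cayleyAut fun W hW w hw => ?_
  obtain ⟨X, hX, hWX⟩ := hB W hW
  obtain ⟨f, hf, hwf⟩ := Set.mem_iUnion₂.1 (hWX ▸ Finset.mem_coe.2 hw)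
  refine ⟨ψ f X, (hψ f hf).mem_basicSets hX, hwf, fun u hu => ?_⟩
  rw [← Finset.mem_coe, hWX]
  exact Set.mem_biUnion hf hu

lemma le_cayleyAut_of_fusion {B : Finset (Finset G)} (hψ : ∀ f ∈ K, InducedBy A A (ψ f) ⇑f)
    (hB : ∀ W ∈ B, ∃ X ∈ A.basicSets,
      (W : Set G) = ⋃ f ∈ (K : Set (Equiv.Perm G)), ((ψ f X : Finset G) : Set G)) :
    K ≤ cayleyAut B := by
  intro σ hσ W hW a b
  obtain ⟨X, hX, hWX⟩ := hB W hW
  rw [← Finset.mem_coe, ← Finset.mem_coe, hWX, mul_inv_mem_iUnion_iff hψ hX,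
    mul_inv_mem_iUnion_iff hψ hX]
  constructor
  · rintro ⟨h, hh, hab⟩
    exact ⟨h * σ, mul_mem hh hσ, hab⟩
  · rintro ⟨h, hh, hab⟩
    exact ⟨h * σ⁻¹, mul_mem hh (inv_mem hσ), by simpa [Equiv.Perm.mul_apply] using hab⟩

end

theorem algebraic_fusion_schurian_general (G : Type) [Group G] [Fintype G] [DecidableEq G]
    (A : SRing G) (hA : A.IsSchurian) (K : Subgroup (Equiv.Perm G))
    (ψ : Equiv.Perm G → Finset G → Finset G)
    (hψ : ∀ f ∈ K, InducedBy A A (ψ f) ⇑f)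
    (A' : SRing G)
    (hA' : ∀ W : Finset G, W ∈ A'.basicSets ↔ ∃ X ∈ A.basicSets,
      (W : Set G) = ⋃ f ∈ (K : Set (Equiv.Perm G)), ((ψ f X : Finset G) : Set G)) :
    A'.IsSchurian := by
  obtain ⟨M, hMright, hMorb⟩ := hA
  replace hMorb := fun Y hY => (hMorb Y).1 hY
  have hfusion := fun W hW => (hA' W).1 hW
  have hML : M ≤ cayleyAut A'.basicSets :=
    (le_cayleyAut_of_orbits hMright hMorb).trans (cayleyAut_le_cayleyAut_of_fusion hψ hfusion)
  have hKL : K ≤ cayleyAut A'.basicSets := le_cayleyAut_of_fusion hψ hfusion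
  refine A'.isSchurian_of_subset_orbit fun W hW => ?_
  obtain ⟨X, hX, hWX⟩ := hfusion W hW
  obtain ⟨x, hx⟩ := A.nonempty_mem X hX
  refine ⟨x, hWX ▸ Set.iUnion₂_subset fun f hf => ?_⟩
  exact (hψ f hf).coe_subset_orbit hMorb hML (mulRight_mem_cayleyAut _) (hKL hf) hX hx

/-- Let `𝒜` be a schurian S-ring over `G`, `K ≤ Iso(𝒜)` a group of
combinatorial automorphisms of `𝒜`, and for `f ∈ K` let `ψ f = φ_f` be the induced
algebraic automorphism. Then the algebraic fusion `𝒜^Φ`, `Φ = {φ_f : f ∈ K}`, whose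
basic sets are the unions `X^Φ = ⋃_{f ∈ K} φ_f(X)` for `X ∈ 𝒮(𝒜)`, is schurian. -/
theorem algebraic_fusion_schurian (G : Type) [Group G] [Fintype G] [DecidableEq G]
    (A : SRing G) (hA : A.IsSchurian) (K : Subgroup (Equiv.Perm G))
    (hK : ∀ f ∈ K, IsCombIso A A ⇑f)
    (ψ : Equiv.Perm G → Finset G → Finset G)
    (hψ : ∀ f ∈ K, InducedBy A A (ψ f) ⇑f)
    (A' : SRing G)
    (hA' : ∀ W : Finset G, W ∈ A'.basicSets ↔ ∃ X ∈ A.basicSets,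
      (W : Set G) = ⋃ f ∈ (K : Set (Equiv.Perm G)), ((ψ f X : Finset G) : Set G)) :
    A'.IsSchurian :=
  algebraic_fusion_schurian_general G A hA K ψ hψ A' hA'
end

section
/- Let G be a finite abelian group with Ω*(|G|) ≥ 2. Then G has a subgroup H such that either |H| = pq for some (not necessarily distinct) odd primes p and q, or |H| = 4q for some odd prime q, or |H| = 8. -/
open Pointwise

/-!
If `|G|` is odd, two prime factors `p, q` of `|G|` give the divisor `pq`; if `|G|` is even, two
prime factors of `|G| / 2` together with the factor `2` give a divisor `pq`, `4q` or `8`.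
A finite abelian group has a subgroup of every order `d` dividing `|G|`: for a prime `p ∣ d`,
Cauchy's theorem gives `g` of order `p`, and a subgroup of order `d / p` of `G ⧸ ⟨g⟩` pulls back
to one of order `d`.
-/

lemma QuotientGroup.card_comap_mk' {G : Type*} [Group G] [Finite G] (N : Subgroup G) [N.Normal]
    (K : Subgroup (G ⧸ N)) : Nat.card (K.comap (mk' N)) = Nat.card K * Nat.card N := by
  have hK := K.card_mul_index
  have hcomap := (K.comap (mk' N)).card_mul_index
  rw [K.index_comap_of_surjective (mk'_surjective N),
    N.card_eq_card_quotient_mul_card_subgroup, ← hK] at hcomap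
  refine Nat.eq_of_mul_eq_mul_right (Nat.pos_of_ne_zero K.index_ne_zero_of_finite) ?_
  rw [hcomap]
  ring

theorem CommGroup.exists_subgroup_card_eq_of_dvd {G : Type*} [CommGroup G] [Finite G] {d : ℕ}
    (hd : d ∣ Nat.card G) : ∃ H : Subgroup G, Nat.card H = d := by
  induction d using Nat.strong_induction_on generalizing G with
  | _ d ih =>
  rcases eq_or_ne d 1 with rfl | hd1
  · exact ⟨⊥, Subgroup.card_bot⟩
  have hp : d.minFac.Prime := Nat.minFac_prime hd1
  have : Fact d.minFac.Prime := ⟨hp⟩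
  obtain ⟨g, hg⟩ := exists_prime_orderOf_dvd_card' d.minFac ((Nat.minFac_dvd d).trans hd)
  set N := Subgroup.zpowers g
  have hN : Nat.card N = d.minFac := (Nat.card_zpowers g).trans hg
  have hd_pos : 0 < d := Nat.pos_of_dvd_of_pos hd Nat.card_pos
  have hquot : d / d.minFac ∣ Nat.card (G ⧸ N) := by
    refine Nat.dvd_of_mul_dvd_mul_right hp.pos ?_
    rwa [Nat.div_mul_cancel (Nat.minFac_dvd d), ← hN, ← N.card_eq_card_quotient_mul_card_subgroup]
  obtain ⟨K, hK⟩ := ih _ (Nat.div_lt_self hd_pos hp.one_lt) hquot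
  refine ⟨K.comap (QuotientGroup.mk' N), ?_⟩
  rw [QuotientGroup.card_comap_mk', hK, hN, Nat.div_mul_cancel (Nat.minFac_dvd d)]

lemma exists_prime_mul_prime_dvd_of_two_le_bigOmega {k : ℕ} (h : 2 ≤ bigOmega k) :
    ∃ p q : ℕ, p.Prime ∧ q.Prime ∧ p * q ∣ k := by
  obtain ⟨p, q, rest, hk⟩ : ∃ p q rest, k.primeFactorsList = p :: q :: rest := by
    unfold bigOmega at h
    match k.primeFactorsList, h with
    | p :: q :: rest, _ => exact ⟨p, q, rest, rfl⟩
  have hmem : ∀ r ∈ k.primeFactorsList, r.Prime := fun _ => Nat.prime_of_mem_primeFactorsList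
  have hk0 : k ≠ 0 := by rintro rfl; simp at hk
  refine ⟨p, q, hmem p (by simp [hk]), hmem q (by simp [hk]), ⟨rest.prod, ?_⟩⟩
  rw [← Nat.prod_primeFactorsList hk0, hk, List.prod_cons, List.prod_cons, mul_assoc]

theorem exists_dvd_of_two_le_omegaStar {n : ℕ} (h : 2 ≤ OmegaStar n) :
    ∃ d, d ∣ n ∧ ((∃ p q : ℕ, p.Prime ∧ q.Prime ∧ Odd p ∧ Odd q ∧ d = p * q) ∨
      (∃ q : ℕ, q.Prime ∧ Odd q ∧ d = 4 * q) ∨ d = 8) := by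
  unfold OmegaStar at h
  split_ifs at h with h2
  · obtain ⟨p, q, hp, hq, hpq⟩ := exists_prime_mul_prime_dvd_of_two_le_bigOmega h
    have h2pq : 2 * (p * q) ∣ n := Nat.mul_div_cancel' h2 ▸ mul_dvd_mul_left 2 hpq
    rcases hp.eq_two_or_odd' with rfl | hpo <;> rcases hq.eq_two_or_odd' with rfl | hqo
    · exact ⟨8, h2pq, Or.inr (Or.inr rfl)⟩
    · exact ⟨4 * q, by rwa [← mul_assoc] at h2pq, Or.inr (Or.inl ⟨q, hq, hqo, rfl⟩)⟩
    · exact ⟨4 * p, by rwa [mul_comm p, ← mul_assoc] at h2pq, Or.inr (Or.inl ⟨p, hp, hpo, rfl⟩)⟩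
    · exact ⟨p * q, hpq.trans (Nat.div_dvd_of_dvd h2), Or.inl ⟨p, q, hp, hq, hpo, hqo, rfl⟩⟩
  · obtain ⟨p, q, hp, hq, hpq⟩ := exists_prime_mul_prime_dvd_of_two_le_bigOmega h
    have hn : Odd n := Nat.odd_iff.2 (Nat.two_dvd_ne_zero.1 h2)
    exact ⟨p * q, hpq, Or.inl ⟨p, q, hp, hq, hn.of_dvd_nat ((dvd_mul_right p q).trans hpq),
      hn.of_dvd_nat ((dvd_mul_left q p).trans hpq), rfl⟩⟩

/-- A finite abelian group `G` with `Ω*(|G|) ≥ 2` has a subgroup `H`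
with `|H| = pq` for odd primes `p, q` (not necessarily distinct), or `|H| = 4q` for
an odd prime `q`, or `|H| = 8`. -/
theorem exists_subgroup_of_omegaStar (G : Type) [CommGroup G] [Fintype G]
    (h : 2 ≤ OmegaStar (Fintype.card G)) :
    ∃ H : Subgroup G,
      (∃ p q : ℕ, p.Prime ∧ q.Prime ∧ Odd p ∧ Odd q ∧ Nat.card H = p * q) ∨
      (∃ q : ℕ, q.Prime ∧ Odd q ∧ Nat.card H = 4 * q) ∨
      Nat.card H = 8 := by
  obtain ⟨d, hd, hshape⟩ := exists_dvd_of_two_le_omegaStar h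
  obtain ⟨H, rfl⟩ :=
    CommGroup.exists_subgroup_card_eq_of_dvd (Nat.card_eq_fintype_card (α := G) ▸ hd)
  exact ⟨H, hshape⟩
end

section
/- Let G be a finite group with identity e and let K be a permutation group on G with G_right ≤ K ≤ Sym(G), where G_right is the image of the right regular representation of G. Then the ℤ-span of {X̲ : X ∈ Orb(K_e, G)}, where K_e is the stabilizer of e in K and the orbits of K_e on G form the underlying partition, is an S-ring over G. -/
open Pointwise

/-!
Let `K₁` be the stabilizer of `1` in `K`. Since `K` contains all right translations, every
`σ ∈ K` and `g ∈ G` give the permutation `twist σ g : x ↦ σ (x * g) * (σ g)⁻¹`, which lies in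
`K₁`. Applied to `g⁻¹` it shows that the inverse of the `K₁`-orbit of `g` is the orbit of `g⁻¹`.
For `σ ∈ K₁` the map `(x, y) ↦ (twist σ y • x, σ y)` sends the factorizations `z = x * y` with
`x ∈ X`, `y ∈ Y` injectively to factorizations of `σ z`, as long as `X` and `Y` are
`K₁`-invariant; hence the structure constants of the orbit partition are constant on orbits.
-/

open MulAction

namespace OrbitSRing

variable {G : Type*} [Group G] {K : Subgroup (Equiv.Perm G)}

def twist (hK : ∀ g : G, Equiv.mulRight g ∈ K) (σ : K) (g : G) : stabilizer K (1 : G) :=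
  ⟨⟨Equiv.mulRight (σ • g)⁻¹ * σ * Equiv.mulRight g,
    mul_mem (mul_mem (hK _) σ.2) (hK g)⟩, by simp [Subgroup.smul_def, Equiv.Perm.smul_def]⟩

theorem twist_smul (hK : ∀ g : G, Equiv.mulRight g ∈ K) (σ : K) (g x : G) :
    twist hK σ g • x = σ • (x * g) * (σ • g)⁻¹ := rfl

theorem twist_smul_mul (hK : ∀ g : G, Equiv.mulRight g ∈ K) (σ : K) (x y : G) :
    twist hK σ y • x * σ • y = σ • (x * y) := by
  rw [twist_smul, inv_mul_cancel_right]

theorem inv_orbit_stabilizer (hK : ∀ g : G, Equiv.mulRight g ∈ K) (g : G) :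
    (orbit (stabilizer K (1 : G)) g)⁻¹ = orbit (stabilizer K (1 : G)) g⁻¹ := by
  suffices h : ∀ g x : G, x⁻¹ ∈ orbit (stabilizer K (1 : G)) g →
      x ∈ orbit (stabilizer K (1 : G)) g⁻¹ by
    ext x
    exact ⟨h g x, fun hx => by simpa using h g⁻¹ x⁻¹ (by simpa using hx)⟩
  rintro g x ⟨σ, hσ⟩
  refine ⟨twist hK σ g, ?_⟩
  have hσ1 : (σ : K) • (1 : G) = 1 := σ.2
  have hσg : (σ : K) • g = x⁻¹ := hσ
  show twist hK σ g • g⁻¹ = x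
  rw [twist_smul, inv_mul_cancel, hσ1, hσg, one_mul, inv_inv]

theorem cnt_le_cnt_smul [DecidableEq G] (hK : ∀ g : G, Equiv.mulRight g ∈ K) {X Y : Finset G}
    (hX : ∀ τ : stabilizer K (1 : G), ∀ x ∈ X, τ • x ∈ X)
    (hY : ∀ τ : stabilizer K (1 : G), ∀ y ∈ Y, τ • y ∈ Y)
    (σ : stabilizer K (1 : G)) (z : G) :
    cnt X Y z ≤ cnt X Y (σ • z) := by
  refine Finset.card_le_card_of_injOn (fun p => (twist hK σ p.2 • p.1, σ • p.2)) ?_ ?_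
  · rintro ⟨x, y⟩ hp
    simp only [Finset.mem_coe, Finset.mem_filter, Finset.mem_product] at hp ⊢
    obtain ⟨⟨hx, hy⟩, rfl⟩ := hp
    exact ⟨⟨hX _ x hx, hY σ y hy⟩, twist_smul_mul hK σ x y⟩
  · rintro ⟨x, y⟩ - ⟨x', y'⟩ - h
    obtain ⟨hx, hy⟩ := Prod.ext_iff.mp h
    obtain rfl : y = y' := smul_left_cancel σ hy
    exact Prod.ext (smul_left_cancel _ hx) rfl

theorem cnt_smul [DecidableEq G] (hK : ∀ g : G, Equiv.mulRight g ∈ K) {X Y : Finset G}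
    (hX : ∀ τ : stabilizer K (1 : G), ∀ x ∈ X, τ • x ∈ X)
    (hY : ∀ τ : stabilizer K (1 : G), ∀ y ∈ Y, τ • y ∈ Y)
    (σ : stabilizer K (1 : G)) (z : G) :
    cnt X Y (σ • z) = cnt X Y z :=
  le_antisymm (by simpa using cnt_le_cnt_smul hK hX hY σ⁻¹ (σ • z))
    (cnt_le_cnt_smul hK hX hY σ z)

section Finite

variable [Finite G]

variable (K) in
noncomputable def orbitFinset (g : G) : Finset G :=
  (Set.toFinite (orbit (stabilizer K (1 : G)) g)).toFinset

@[simp]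
theorem coe_orbitFinset (g : G) :
    (orbitFinset K g : Set G) = orbit (stabilizer K (1 : G)) g :=
  Set.Finite.coe_toFinset _

@[simp]
theorem mem_orbitFinset {g x : G} : x ∈ orbitFinset K g ↔ x ∈ orbit (stabilizer K (1 : G)) g :=
  Set.Finite.mem_toFinset _

theorem smul_mem_orbitFinset (τ : stabilizer K (1 : G)) {g x : G} (hx : x ∈ orbitFinset K g) :
    τ • x ∈ orbitFinset K g := by
  rw [mem_orbitFinset] at hx ⊢
  exact mem_orbit_of_mem_orbit τ hx

theorem orbitFinset_one : orbitFinset K (1 : G) = {1} := by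
  ext x
  simp only [mem_orbitFinset, Finset.mem_singleton]
  refine ⟨fun ⟨σ, hσ⟩ => hσ.symm.trans σ.2, by rintro rfl; exact mem_orbit_self 1⟩

theorem orbitFinset_inv [DecidableEq G] (hK : ∀ g : G, Equiv.mulRight g ∈ K) (g : G) :
    (orbitFinset K g)⁻¹ = orbitFinset K g⁻¹ :=
  Finset.coe_injective <| by simp [inv_orbit_stabilizer hK]

theorem orbitFinset_eq_or_disjoint (g g' : G) :
    orbitFinset K g = orbitFinset K g' ∨ Disjoint (orbitFinset K g) (orbitFinset K g') := by
  simpa [← Finset.coe_inj, ← Finset.disjoint_coe] using orbit.eq_or_disjoint g g'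

end Finite

variable [Fintype G] [DecidableEq G]

noncomputable def orbitSRing (hK : ∀ g : G, Equiv.mulRight g ∈ K) : SRing G where
  basicSets := Finset.univ.image (orbitFinset K)
  nonempty_mem := by
    simp only [Finset.mem_image, Finset.mem_univ, true_and, forall_exists_index,
      forall_apply_eq_imp_iff]
    exact fun g => ⟨g, mem_orbitFinset.mpr (mem_orbit_self g)⟩
  exists_mem g := ⟨orbitFinset K g, by simp, mem_orbitFinset.mpr (mem_orbit_self g)⟩
  pairwise_disjoint := by
    simp only [Finset.mem_image, Finset.mem_univ, true_and, forall_exists_index,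
      forall_apply_eq_imp_iff]
    exact fun g g' hne => (orbitFinset_eq_or_disjoint g g').resolve_left hne
  one_mem := Finset.mem_image.mpr ⟨1, Finset.mem_univ _, orbitFinset_one⟩
  inv_mem := by
    simp only [Finset.mem_image, Finset.mem_univ, true_and, forall_exists_index,
      forall_apply_eq_imp_iff]
    exact fun g => ⟨g⁻¹, (orbitFinset_inv hK g).symm⟩
  const := by
    simp only [Finset.mem_image, Finset.mem_univ, true_and, forall_exists_index,
      forall_apply_eq_imp_iff, mem_orbitFinset]
    intro gX gY gZ z hz z' hz'
    obtain ⟨σ, rfl⟩ := orbit_eq_iff.mpr hz ▸ hz'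
    exact (cnt_smul hK (fun τ _ => smul_mem_orbitFinset τ)
      (fun τ _ => smul_mem_orbitFinset τ) σ z).symm

theorem mem_orbitSRing_basicSets (hK : ∀ g : G, Equiv.mulRight g ∈ K) (X : Finset G) :
    X ∈ (orbitSRing hK).basicSets ↔ ∃ g : G, (X : Set G) = orbit (stabilizer K (1 : G)) g := by
  simp [orbitSRing, ← coe_orbitFinset, eq_comm]

end OrbitSRing

/-- For a permutation group `K` with `G_right ≤ K ≤ Sym(G)`, the
partition of `G` into the orbits of the stabilizer `K_e` of the identity defines an
S-ring over `G` (Schur's theorem: `V(K,G)` is an S-ring). -/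
theorem orbit_partition_is_SRing (G : Type) [Group G] [Fintype G] [DecidableEq G]
    (K : Subgroup (Equiv.Perm G)) (hK : ∀ g : G, Equiv.mulRight g ∈ K) :
    ∃ A : SRing G, ∀ X : Finset G, X ∈ A.basicSets ↔
      ∃ g : G, (X : Set G) = MulAction.orbit (MulAction.stabilizer K (1 : G)) g :=
  ⟨OrbitSRing.orbitSRing hK, OrbitSRing.mem_orbitSRing_basicSets hK⟩
end
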